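/- arXiv:2011.11116 — 2 statements merged into one kernel-verified Lean document; each statement's English description precedes it below -/
import Mathlib

section
/- Let K be a field with char(K) ≠ 2 and consider UJ2 with the scalar grading: E0 = K·(e11+e22), E1 = span{e11−e22, e12}. Then for all Y1, Y2 ∈ E0 and all Z1, Z2, Z3, Z4 ∈ E1 the following hold, where (u,v,w) = (u∘v)∘w − u∘(v∘w): (Y1,Y2,Z1) together with all associators of elements of E0 vanish, namely (Y1,Y2,Y2) = 0 for Y's in E0; moreover (Z1,Y1,Y2) = 0, (Y1,Z1,Z2) = 0, and Z1∘(Z2,Z3,Z4) = 0. -/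
open Matrix

noncomputable section

/-- The 2×2 matrices over `K`. -/
abbrev Mat (K : Type*) [Field K] : Type _ := Matrix (Fin 2) (Fin 2) K

/-- The Jordan product `u∘v = (1/2)(u·v + v·u)`. -/
def jp {K : Type*} [Field K] (u v : Mat K) : Mat K := (1/2 : K) • (u * v + v * u)

/-- The Jordan associator `(u,v,w) = (u∘v)∘w − u∘(v∘w)`. -/
def assoc {K : Type*} [Field K] (u v w : Mat K) : Mat K := jp (jp u v) w - jp u (jp v w)

def oneM (K : Type*) [Field K] : Mat K := !![1, 0; 0, 1]
def aM (K : Type*) [Field K] : Mat K := !![1, 0; 0, -1]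
def bM (K : Type*) [Field K] : Mat K := !![0, 1; 0, 0]

/-- Even component of the scalar grading: `K·(e11+e22)`. -/
def E0 (K : Type*) [Field K] : Submodule K (Mat K) :=
  Submodule.span K {oneM K}

/-- Odd component of the scalar grading: `span{e11−e22, e12}`. -/
def E1 (K : Type*) [Field K] : Submodule K (Mat K) :=
  Submodule.span K {aM K, bM K}

set_option maxHeartbeats 2000000 in
/-- the graded identities of Lemma 16 (`lemaGS`) hold in `UJ₂` with the
scalar grading: all associators of even elements vanish, `(Z1,Y1,Y2) = 0`,
`(Y1,Z1,Z2) = 0` and `Z1∘(Z2,Z3,Z4) = 0`. -/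
theorem stmt_10 (K : Type*) [Field K] (hK : ringChar K ≠ 2)
    (Y1 Y2 Y3 : Mat K) (hY1 : Y1 ∈ E0 K) (hY2 : Y2 ∈ E0 K) (hY3 : Y3 ∈ E0 K)
    (Z1 Z2 Z3 Z4 : Mat K) (hZ1 : Z1 ∈ E1 K) (hZ2 : Z2 ∈ E1 K) (hZ3 : Z3 ∈ E1 K)
    (hZ4 : Z4 ∈ E1 K) :
    assoc Y1 Y2 Y3 = 0 ∧ assoc Z1 Y1 Y2 = 0 ∧ assoc Y1 Z1 Z2 = 0 ∧
    jp Z1 (assoc Z2 Z3 Z4) = 0 := by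
  have h0 : ∀ Y ∈ E0 K, ∃ c : K, Y = c • oneM K := by
    intro Y hY
    rw [E0, Submodule.mem_span_singleton] at hY
    exact hY.imp fun c h => h.symm
  have h1 : ∀ Z ∈ E1 K, ∃ c d : K, Z = c • aM K + d • bM K := by
    intro Z hZ
    rw [E1, Submodule.mem_span_pair] at hZ
    obtain ⟨c, d, h⟩ := hZ
    exact ⟨c, d, h.symm⟩
  obtain ⟨y1, rfl⟩ := h0 Y1 hY1
  obtain ⟨y2, rfl⟩ := h0 Y2 hY2
  obtain ⟨y3, rfl⟩ := h0 Y3 hY3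
  obtain ⟨c1, d1, rfl⟩ := h1 Z1 hZ1
  obtain ⟨c2, d2, rfl⟩ := h1 Z2 hZ2
  obtain ⟨c3, d3, rfl⟩ := h1 Z3 hZ3
  obtain ⟨c4, d4, rfl⟩ := h1 Z4 hZ4
  have e11 : oneM K * oneM K = oneM K := by
    simp [oneM, Matrix.mul_fin_two]
  have e1a : oneM K * aM K = aM K := by simp [oneM, aM, Matrix.mul_fin_two]
  have ea1 : aM K * oneM K = aM K := by simp [oneM, aM, Matrix.mul_fin_two]
  have e1b : oneM K * bM K = bM K := by simp [oneM, bM, Matrix.mul_fin_two]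
  have eb1 : bM K * oneM K = bM K := by
    ext i j
    fin_cases i <;> fin_cases j <;>
      simp [oneM, bM, Matrix.mul_apply, Fin.sum_univ_two]
  have eaa : aM K * aM K = oneM K := by
    simp [oneM, aM, Matrix.mul_fin_two]
  have eab : aM K * bM K = bM K := by simp [aM, bM, Matrix.mul_fin_two]
  have eba : bM K * aM K = -bM K := by
    ext i j
    fin_cases i <;> fin_cases j <;>
      simp [aM, bM, Matrix.mul_apply, Fin.sum_univ_two]
  have ebb : bM K * bM K = 0 := by
    ext i j
    fin_cases i <;> fin_cases j <;>
      simp [bM, Matrix.mul_apply, Fin.sum_univ_two]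
  refine ⟨?_, ?_, ?_, ?_⟩ <;>
  · simp only [assoc, jp, smul_add, add_mul, mul_add, sub_mul, mul_sub, smul_sub, smul_mul_assoc,
      mul_smul_comm, smul_smul, e11, e1a, ea1, e1b, eb1, eaa, eab, eba, ebb,
      smul_neg, smul_zero, mul_neg, neg_neg, neg_mul, zero_mul, mul_zero]
    module
end
end

section
/- Let K be a finite field with exactly q elements and char(K) ≠ 2, and consider UJ2 with the scalar grading: E0 = K·(e11+e22), E1 = span{e11−e22, e12}. Then for every Y ∈ E0 one has Y^q = Y, and for all Z1, Z2 ∈ E1 one has (Z1^q − Z1)∘Z2 = 0, where powers are matrix powers. -/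
open Matrix

noncomputable section

lemma oneM_eq_one (K : Type*) [Field K] : oneM K = 1 := by
  rw [oneM, Matrix.one_fin_two]

lemma odd_form {K : Type*} [Field K] (α β : K) :
    α • aM K + β • bM K = !![α, β; 0, -α] := by
  simp [aM, bM]

lemma odd_sq {K : Type*} [Field K] (α β : K) :
    (!![α, β; 0, -α] : Mat K) ^ 2 = (α ^ 2) • 1 := by
  ext i j
  fin_cases i <;> fin_cases j <;>
    simp [pow_two, Matrix.mul_fin_two, Matrix.one_fin_two] <;> ring

lemma jp_smul {K : Type*} [Field K] (c : K) (u v : Mat K) :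
    jp (c • u) v = c • jp u v := by
  simp [jp, smul_mul_assoc, mul_smul_comm, smul_add, smul_smul, mul_comm]

lemma jp_odd {K : Type*} [Field K] (h2 : (2:K) ≠ 0) (α β γ δ : K) :
    jp (!![α, β; 0, -α] : Mat K) !![γ, δ; 0, -γ] = (α * γ) • 1 := by
  rw [jp, Matrix.mul_fin_two, Matrix.mul_fin_two, Matrix.one_fin_two]
  ext i j
  fin_cases i <;> fin_cases j <;> simp [h2] <;> (try field_simp) <;> (try ring)

/-- over a finite field with `q` elements, `char K ≠ 2`, in `UJ₂` with the
scalar grading: `Y^q = Y` for every even `Y`, and `(Z1^q − Z1)∘Z2 = 0` for odd `Z1, Z2`. -/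
theorem stmt_12 (K : Type*) [Field K] [Fintype K] (q : ℕ) (hq : Fintype.card K = q)
    (hK : ringChar K ≠ 2)
    (Y : Mat K) (hY : Y ∈ E0 K)
    (Z1 Z2 : Mat K) (hZ1 : Z1 ∈ E1 K) (hZ2 : Z2 ∈ E1 K) :
    Y ^ q = Y ∧ jp (Z1 ^ q - Z1) Z2 = 0 := by
  subst hq
  constructor
  · obtain ⟨c, hc⟩ := Submodule.mem_span_singleton.mp hY
    rw [← hc, oneM_eq_one, smul_pow, one_pow, FiniteField.pow_card]
  · obtain ⟨α, β, h1⟩ := Submodule.mem_span_pair.mp hZ1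
    obtain ⟨γ, δ, h2⟩ := Submodule.mem_span_pair.mp hZ2
    rw [odd_form] at h1 h2
    subst h1; subst h2
    -- q is odd
    have hp : (ringChar K).Prime := CharP.char_is_prime K _
    have hodd : Odd (Fintype.card K) := by
      obtain ⟨n, hn⟩ := FiniteField.card K (ringChar K)
      rw [hn.2]
      exact (hp.odd_of_ne_two hK).pow
    obtain ⟨k, hk⟩ := hodd
    have hpow : (!![α, β; 0, -α] : Mat K) ^ Fintype.card K =
        (α ^ (2 * k)) • !![α, β; 0, -α] := by
      rw [hk, pow_succ, pow_mul, odd_sq, smul_pow, one_pow, ← pow_mul, smul_mul_assoc, one_mul]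
    rw [hpow]
    have : (α ^ (2 * k)) • (!![α, β; 0, -α] : Mat K) - !![α, β; 0, -α]
        = (α ^ (2 * k) - 1) • !![α, β; 0, -α] := by
      rw [sub_smul, one_smul]
    have h2 : (2:K) ≠ 0 := by
      intro h
      have hd := (CharP.cast_eq_zero_iff K (ringChar K) 2).mp (by exact_mod_cast h)
      exact hK ((Nat.prime_dvd_prime_iff_eq hp Nat.prime_two).mp hd)
    rw [this, jp_smul, jp_odd h2, smul_smul]
    have hcard : α ^ Fintype.card K = α := FiniteField.pow_card α
    rw [hk, pow_succ] at hcard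
    have : (α ^ (2 * k) - 1) * (α * γ) = (α ^ (2 * k) * α - α) * γ := by ring
    rw [this, hcard, sub_self, zero_mul, zero_smul]
end
end
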